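/- arXiv:2501.15163 — 10 statements merged into one kernel-verified Lean document; each statement's English description precedes it below -/
import Mathlib

section
/- For every integer K ≥ 1, all vectors a, b ∈ ℝ^K and every index i ∈ {1,…,K}, the softmax function satisfies |S(a)_i − S(b)_i| ≤ √2 · ‖a − b‖₂. -/
/-! Write `d = a - b`. Each ratio `exp (a j - a i) / exp (b j - b i) = exp (d j - d i)` lies in
`[exp (-D), exp D]` with `D = max_j |d i - d j|`, so `S(a)_i ≤ exp D · S(b)_i` and vice versa.
Since softmax values are at most `1`, this gives `S(a)_i - S(b)_i ≤ 1 - exp (-D) ≤ D`, and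
`|d i - d j| ≤ √2 ‖d‖₂` by Cauchy–Schwarz on the two coordinates `i`, `j`. -/

open scoped BigOperators

/-- The softmax function `S(x)_i = exp(x_i) / ∑_j exp(x_j)` on `ℝ^K`. -/
noncomputable def softmax {K : ℕ} (x : Fin K → ℝ) : Fin K → ℝ :=
  fun i => Real.exp (x i) / ∑ j, Real.exp (x j)

open Finset Real

theorem sq_sub_le_two_mul_sum_sq {ι : Type*} [Fintype ι] (d : ι → ℝ) (i j : ι) :
    (d i - d j) ^ 2 ≤ 2 * ∑ k, d k ^ 2 := by
  classical
  have hsum_nonneg : 0 ≤ ∑ k, d k ^ 2 := sum_nonneg fun k _ => sq_nonneg _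
  rcases eq_or_ne i j with rfl | hij
  · simpa using hsum_nonneg
  · have hpair : d i ^ 2 + d j ^ 2 ≤ ∑ k, d k ^ 2 := by
      simpa [sum_pair hij] using
        sum_le_sum_of_subset_of_nonneg (subset_univ {i, j}) fun k _ _ => sq_nonneg (d k)
    nlinarith [sq_nonneg (d i + d j)]

theorem abs_sub_le_sqrt_two_mul_sqrt_sum_sq {ι : Type*} [Fintype ι] (d : ι → ℝ) (i j : ι) :
    |d i - d j| ≤ √2 * √(∑ k, d k ^ 2) := by
  rw [← sqrt_sq_eq_abs, ← sqrt_mul zero_le_two]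
  exact sqrt_le_sqrt (sq_sub_le_two_mul_sum_sq d i j)

theorem sub_le_of_le_exp_mul {p q D : ℝ} (hp : p ≤ 1) (hD : 0 ≤ D) (h : p ≤ exp D * q) :
    p - q ≤ D := by
  have hq : exp (-D) * p ≤ q := by
    rwa [exp_neg, inv_mul_le_iff₀ (exp_pos D)]
  have hexp_le_one : exp (-D) ≤ 1 := exp_le_one_iff.mpr (neg_nonpos.mpr hD)
  calc p - q ≤ p * (1 - exp (-D)) := by linarith
    _ ≤ 1 - exp (-D) := mul_le_of_le_one_left (sub_nonneg.mpr hexp_le_one) hp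
    _ ≤ D := by linarith [add_one_le_exp (-D)]

theorem sum_exp_pos {ι : Type*} [Fintype ι] [Nonempty ι] (x : ι → ℝ) : 0 < ∑ j, exp (x j) :=
  sum_pos (fun _ _ => exp_pos _) univ_nonempty

theorem softmax_le_one {K : ℕ} (x : Fin K → ℝ) (i : Fin K) : softmax x i ≤ 1 := by
  have : Nonempty (Fin K) := ⟨i⟩
  rw [softmax, div_le_one (sum_exp_pos x)]
  exact single_le_sum (fun j _ => (exp_pos _).le) (mem_univ i)

theorem softmax_le_exp_mul_softmax {K : ℕ} {a b : Fin K → ℝ} {i : Fin K} {D : ℝ}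
    (h : ∀ j, (a i - b i) - (a j - b j) ≤ D) : softmax a i ≤ exp D * softmax b i := by
  have : Nonempty (Fin K) := ⟨i⟩
  rw [softmax, softmax, mul_div_assoc', div_le_div_iff₀ (sum_exp_pos a) (sum_exp_pos b),
    mul_sum, mul_sum]
  refine sum_le_sum fun j _ => ?_
  rw [← exp_add, ← exp_add, ← exp_add]
  exact exp_le_exp.mpr (by linarith [h j])

theorem abs_softmax_sub_softmax_le {K : ℕ} {a b : Fin K → ℝ} {i : Fin K} {D : ℝ}
    (h : ∀ j, |(a i - b i) - (a j - b j)| ≤ D) : |softmax a i - softmax b i| ≤ D := by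
  have hD : 0 ≤ D := (abs_nonneg _).trans (h i)
  rw [abs_sub_le_iff]
  constructor
  · exact sub_le_of_le_exp_mul (softmax_le_one a i) hD
      (softmax_le_exp_mul_softmax fun j => (abs_le.mp (h j)).2)
  · exact sub_le_of_le_exp_mul (softmax_le_one b i) hD
      (softmax_le_exp_mul_softmax fun j => by linarith [(abs_le.mp (h j)).1])

theorem softmax_coord_lipschitz_general (K : ℕ) (a b : Fin K → ℝ) (i : Fin K) :
    |softmax a i - softmax b i| ≤ Real.sqrt 2 * Real.sqrt (∑ j, (a j - b j) ^ 2) :=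
  abs_softmax_sub_softmax_le fun j => abs_sub_le_sqrt_two_mul_sqrt_sum_sq (a - b) i j

/-- Each coordinate of the softmax is `√2`-Lipschitz with respect to the
Euclidean norm: `|S(a)_i − S(b)_i| ≤ √2 ‖a − b‖₂`. -/
theorem softmax_coord_lipschitz (K : ℕ) (hK : 1 ≤ K) (a b : Fin K → ℝ) (i : Fin K) :
    |softmax a i - softmax b i| ≤ Real.sqrt 2 * Real.sqrt (∑ j, (a j - b j) ^ 2) :=
  softmax_coord_lipschitz_general K a b i
end

section
/- For every integer K ≥ 1 and all vectors a, b ∈ ℝ^K, the softmax function satisfies ∑_{i=1}^K |S(a)_i − S(b)_i| ≤ √2 · K · ‖a − b‖₂; that is, ‖S(a) − S(b)‖₁ ≤ √2 K ‖a − b‖₂. -/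
open scoped BigOperators

lemma abs_exp_sub_exp (x y : ℝ) :
    |Real.exp x - Real.exp y| ≤ max (Real.exp x) (Real.exp y) * |x - y| := by
  wlog h : y ≤ x generalizing x y
  · have := this y x (le_of_not_ge h)
    rw [abs_sub_comm, abs_sub_comm x y, max_comm]
    exact this
  have h1 : Real.exp x * ((y - x) + 1) ≤ Real.exp x * Real.exp (y - x) :=
    mul_le_mul_of_nonneg_left (by linarith [Real.add_one_le_exp (y - x)])
      (Real.exp_pos x).le
  rw [← Real.exp_add] at h1
  have hxy : x + (y - x) = y := by ring
  rw [hxy] at h1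
  have hx : Real.exp y ≤ Real.exp x := Real.exp_le_exp.2 h
  rw [abs_of_nonneg (by linarith), abs_of_nonneg (by linarith), max_eq_left hx]
  nlinarith [h1]

lemma softmax_l1_aux {K : ℕ} (a b : Fin K → ℝ)
    (hUV : ∑ j, Real.exp (a j) ≤ ∑ j, Real.exp (b j)) :
    ∑ i, |softmax a i - softmax b i| ≤ 2 * ∑ i, |a i - b i| := by
  set U := ∑ j, Real.exp (a j) with hU
  set V := ∑ j, Real.exp (b j) with hV
  rcases Nat.eq_zero_or_pos K with h0 | hK
  · subst h0; simp
  have hUpos : 0 < U := Finset.sum_pos (fun i _ => Real.exp_pos _) (by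
    simpa [Finset.univ_nonempty_iff] using Fin.pos_iff_nonempty.1 hK)
  have hVpos : 0 < V := lt_of_lt_of_le hUpos hUV
  -- key per-index decomposition
  have key : ∀ i, |softmax a i - softmax b i| ≤
      |Real.exp (a i) - Real.exp (b i)| / V + Real.exp (a i) * (V - U) / (U * V) := by
    intro i
    have hdecomp : softmax a i - softmax b i =
        (Real.exp (a i) - Real.exp (b i)) / V + Real.exp (a i) * (V - U) / (U * V) := by
      simp only [softmax, ← hU, ← hV]
      field_simp
      ring
    rw [hdecomp]
    refine (abs_add_le _ _).trans ?_
    have hVU : 0 ≤ V - U := sub_nonneg.2 hUV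
    rw [abs_div, abs_of_pos hVpos, abs_of_nonneg
      (div_nonneg (mul_nonneg (Real.exp_pos _).le hVU) (mul_pos hUpos hVpos).le)]
  calc ∑ i, |softmax a i - softmax b i|
      ≤ ∑ i, (|Real.exp (a i) - Real.exp (b i)| / V
          + Real.exp (a i) * (V - U) / (U * V)) := Finset.sum_le_sum fun i _ => key i
    _ = (∑ i, |Real.exp (a i) - Real.exp (b i)|) / V + (V - U) / V := by
        rw [Finset.sum_add_distrib, ← Finset.sum_div, ← Finset.sum_div,
          ← Finset.sum_mul, ← hU, mul_div_mul_left _ _ (ne_of_gt hUpos)]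
    _ ≤ (∑ i, |Real.exp (a i) - Real.exp (b i)|) / V
          + (∑ i, |Real.exp (a i) - Real.exp (b i)|) / V := by
        gcongr
        have : V - U = ∑ i, (Real.exp (b i) - Real.exp (a i)) := by
          rw [Finset.sum_sub_distrib, ← hU, ← hV]
        rw [this]
        exact Finset.sum_le_sum fun i _ => by
          rw [abs_sub_comm]; exact le_abs_self _
    _ = 2 * ((∑ i, |Real.exp (a i) - Real.exp (b i)|) / V) := by ring
    _ ≤ 2 * ∑ i, |a i - b i| := by
        have hsum : ∀ i, |Real.exp (a i) - Real.exp (b i)| ≤ V * |a i - b i| := by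
          intro i
          refine (abs_exp_sub_exp _ _).trans ?_
          gcongr
          refine max_le ?_ ?_
          · exact le_trans (Finset.single_le_sum (f := fun j => Real.exp (a j))
              (fun j _ => (Real.exp_pos _).le) (Finset.mem_univ i)) hUV
          · exact Finset.single_le_sum (f := fun j => Real.exp (b j))
              (fun j _ => (Real.exp_pos _).le) (Finset.mem_univ i)
        have hs := Finset.sum_le_sum fun i (_ : i ∈ Finset.univ) => hsum i
        rw [← Finset.mul_sum] at hs
        have hd : (∑ i, |Real.exp (a i) - Real.exp (b i)|) / V ≤ ∑ i, |a i - b i| := by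
          rw [div_le_iff₀ hVpos]
          linarith [hs]
        linarith
    
lemma softmax_l1 {K : ℕ} (a b : Fin K → ℝ) :
    ∑ i, |softmax a i - softmax b i| ≤ 2 * ∑ i, |a i - b i| := by
  rcases le_total (∑ j, Real.exp (a j)) (∑ j, Real.exp (b j)) with h | h
  · exact softmax_l1_aux a b h
  · have := softmax_l1_aux b a h
    simpa [abs_sub_comm] using this

/-- The ℓ¹ distance between softmax outputs is bounded:
`‖S(a) − S(b)‖₁ ≤ √2 · K · ‖a − b‖₂`. -/
theorem softmax_l1_lipschitz (K : ℕ) (hK : 1 ≤ K) (a b : Fin K → ℝ) :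
    ∑ i, |softmax a i - softmax b i|
      ≤ Real.sqrt 2 * K * Real.sqrt (∑ j, (a j - b j) ^ 2) := by
  rcases eq_or_lt_of_le hK with h1 | h2
  · -- K = 1 : softmax is constantly 1
    subst h1
    have : ∀ (x : Fin 1 → ℝ) (i : Fin 1), softmax x i = 1 := by
      intro x i
      simp [softmax, Fin.sum_univ_one, Subsingleton.elim i 0,
        Real.exp_ne_zero]
    rw [Fin.sum_univ_one, this, this]
    simpa using by positivity

  · -- K ≥ 2
    have hCS : ∑ i, |a i - b i| ≤ Real.sqrt K * Real.sqrt (∑ j, (a j - b j) ^ 2) := by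
      have h := sq_sum_le_card_mul_sum_sq (s := (Finset.univ : Finset (Fin K)))
        (f := fun i => |a i - b i|)
      simp only [Finset.card_univ, Fintype.card_fin, sq_abs] at h
      have hnn : 0 ≤ ∑ i, |a i - b i| := Finset.sum_nonneg fun i _ => abs_nonneg _
      calc ∑ i, |a i - b i| = Real.sqrt ((∑ i, |a i - b i|) ^ 2) := by
            rw [Real.sqrt_sq hnn]
        _ ≤ Real.sqrt ((K : ℝ) * ∑ j, (a j - b j) ^ 2) := Real.sqrt_le_sqrt h
        _ = Real.sqrt K * Real.sqrt (∑ j, (a j - b j) ^ 2) := by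
            rw [Real.sqrt_mul (by positivity)]
    have h2K : 2 * Real.sqrt K ≤ Real.sqrt 2 * K := by
      have : (2 : ℝ) * Real.sqrt K = Real.sqrt (4 * K) := by
        rw [Real.sqrt_mul (by norm_num), show (4:ℝ) = 2^2 by norm_num,
          Real.sqrt_sq (by norm_num)]
      rw [this]
      have h2' : Real.sqrt 2 * K = Real.sqrt (2 * K ^ 2) := by
        rw [Real.sqrt_mul (by norm_num), Real.sqrt_sq (by positivity)]
      rw [h2']
      apply Real.sqrt_le_sqrt
      have hK2 : (2 : ℝ) ≤ K := by exact_mod_cast h2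
      nlinarith
    calc ∑ i, |softmax a i - softmax b i| ≤ 2 * ∑ i, |a i - b i| := softmax_l1 a b
      _ ≤ 2 * (Real.sqrt K * Real.sqrt (∑ j, (a j - b j) ^ 2)) := by linarith
      _ = (2 * Real.sqrt K) * Real.sqrt (∑ j, (a j - b j) ^ 2) := by ring
      _ ≤ Real.sqrt 2 * K * Real.sqrt (∑ j, (a j - b j) ^ 2) :=
          mul_le_mul_of_nonneg_right h2K (Real.sqrt_nonneg _)
end

section
/- For every integer K ≥ 1, all vectors a, b ∈ ℝ^K and every index i ∈ {1,…,K}, |log S(a)_i − log S(b)_i| ≤ √2 · ‖a − b‖₂, where S is the softmax function (note S(x)_i > 0 always, so the logarithms are defined). -/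
open scoped BigOperators

/-- Each coordinate of the log-softmax is `√2`-Lipschitz with respect to the
Euclidean norm: `|log S(a)_i − log S(b)_i| ≤ √2 ‖a − b‖₂`. -/
theorem log_softmax_coord_lipschitz (K : ℕ) (hK : 1 ≤ K) (a b : Fin K → ℝ) (i : Fin K) :
    |Real.log (softmax a i) - Real.log (softmax b i)|
      ≤ Real.sqrt 2 * Real.sqrt (∑ j, (a j - b j) ^ 2) := by
  have hZa : 0 < ∑ j, Real.exp (a j) :=
    Finset.sum_pos (fun j _ => Real.exp_pos _) ⟨i, Finset.mem_univ i⟩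
  have hZb : 0 < ∑ j, Real.exp (b j) :=
    Finset.sum_pos (fun j _ => Real.exp_pos _) ⟨i, Finset.mem_univ i⟩
  have hS : (0:ℝ) ≤ ∑ j, (a j - b j) ^ 2 := Finset.sum_nonneg fun j _ => sq_nonneg _
  have key : ∀ p q : Fin K,
      |(a p - b p) - (a q - b q)| ≤ Real.sqrt 2 * Real.sqrt (∑ j, (a j - b j) ^ 2) := by
    intro p q
    rcases eq_or_ne p q with rfl | hpq
    · simpa using mul_nonneg (Real.sqrt_nonneg 2) (Real.sqrt_nonneg _)
    · rw [← Real.sqrt_mul (by norm_num : (0:ℝ) ≤ 2), ← Real.sqrt_sq_eq_abs]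
      apply Real.sqrt_le_sqrt
      have hpair : (a p - b p) ^ 2 + (a q - b q) ^ 2 ≤ ∑ j, (a j - b j) ^ 2 := by
        have h := Finset.sum_le_sum_of_subset_of_nonneg
          (Finset.subset_univ ({p, q} : Finset (Fin K)))
          (fun j _ _ => sq_nonneg (a j - b j))
        rwa [Finset.sum_pair hpq] at h
      nlinarith [sq_nonneg ((a p - b p) + (a q - b q))]
  have hlog : ∀ x : Fin K → ℝ,
      Real.log (softmax x i) = x i - Real.log (∑ j, Real.exp (x j)) := by
    intro x
    have hx : 0 < ∑ j, Real.exp (x j) :=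
      Finset.sum_pos (fun j _ => Real.exp_pos _) ⟨i, Finset.mem_univ i⟩
    rw [softmax, Real.log_div (Real.exp_ne_zero _) (ne_of_gt hx), Real.log_exp]
  rw [hlog a, hlog b]
  obtain ⟨k, -, hk⟩ := Finset.exists_min_image Finset.univ (fun j => a j - b j)
    ⟨i, Finset.mem_univ i⟩
  obtain ⟨l, -, hl⟩ := Finset.exists_max_image Finset.univ (fun j => a j - b j)
    ⟨i, Finset.mem_univ i⟩
  have hlow : (a k - b k) + Real.log (∑ j, Real.exp (b j))
      ≤ Real.log (∑ j, Real.exp (a j)) := by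
    have h1 : Real.exp (a k - b k) * ∑ j, Real.exp (b j) ≤ ∑ j, Real.exp (a j) := by
      rw [Finset.mul_sum]
      refine Finset.sum_le_sum fun j _ => ?_
      rw [← Real.exp_add]
      exact Real.exp_le_exp.mpr (by have := hk j (Finset.mem_univ j); simp at this; linarith)
    calc (a k - b k) + Real.log (∑ j, Real.exp (b j))
        = Real.log (Real.exp (a k - b k) * ∑ j, Real.exp (b j)) := by
          rw [Real.log_mul (Real.exp_ne_zero _) (ne_of_gt hZb), Real.log_exp]
      _ ≤ _ := Real.log_le_log (by positivity) h1
  have hhigh : Real.log (∑ j, Real.exp (a j))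
      ≤ (a l - b l) + Real.log (∑ j, Real.exp (b j)) := by
    have h1 : ∑ j, Real.exp (a j) ≤ Real.exp (a l - b l) * ∑ j, Real.exp (b j) := by
      rw [Finset.mul_sum]
      refine Finset.sum_le_sum fun j _ => ?_
      rw [← Real.exp_add]
      exact Real.exp_le_exp.mpr (by have := hl j (Finset.mem_univ j); simp at this; linarith)
    calc Real.log (∑ j, Real.exp (a j))
        ≤ Real.log (Real.exp (a l - b l) * ∑ j, Real.exp (b j)) := Real.log_le_log hZa h1
      _ = _ := by rw [Real.log_mul (Real.exp_ne_zero _) (ne_of_gt hZb), Real.log_exp]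
  have hik := abs_le.mp (key i k)
  have hil := abs_le.mp (key i l)
  rw [abs_le]
  constructor
  · linarith [hil.1]
  · linarith [hik.2]
end

section
/- Let K ≥ 1 be an integer. Define the cross-entropy loss ℓ(u, q) = −∑_{i=1}^K q_i log u_i for u ∈ ℝ^K with all u_i > 0 and q ∈ ℝ^K. Then for every q in the probability simplex 𝒴 and all a, b ∈ ℝ^K, |ℓ(S(a), q) − ℓ(S(b), q)| ≤ √2 · K · ‖a − b‖₂. -/
open scoped BigOperators

lemma lse_diff_le {K : ℕ} (hK : 0 < K) (a b : Fin K → ℝ) :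
    Real.log (∑ j, Real.exp (a j)) - Real.log (∑ j, Real.exp (b j))
      ≤ ∑ j, |a j - b j| := by
  have hne : (Finset.univ : Finset (Fin K)).Nonempty := by
    simpa using Finset.univ_nonempty_iff.2 (Fin.pos_iff_nonempty.mp hK)
  have hSb : 0 < ∑ j, Real.exp (b j) :=
    Finset.sum_pos (fun j _ => Real.exp_pos _) hne
  set L : ℝ := ∑ j, |a j - b j| with hL
  have hle : ∑ j, Real.exp (a j) ≤ Real.exp L * ∑ j, Real.exp (b j) := by
    rw [Finset.mul_sum]
    apply Finset.sum_le_sum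
    intro j _
    have h1 : a j - b j ≤ |a j - b j| := le_abs_self _
    have h2 : |a j - b j| ≤ L := by
      rw [hL]
      exact Finset.single_le_sum (f := fun i => |a i - b i|) (fun i _ => abs_nonneg _)
        (Finset.mem_univ j)
    calc Real.exp (a j) ≤ Real.exp (L + b j) := Real.exp_le_exp.2 (by linarith)
      _ = Real.exp L * Real.exp (b j) := Real.exp_add _ _
  have := Real.log_le_log (by positivity) hle
  rw [Real.log_mul (by positivity) (ne_of_gt hSb), Real.log_exp] at this
  linarith

/-- The cross-entropy loss `ℓ(u,q) = −∑_i q_i log u_i` composed with the softmax is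
`√2·K`-Lipschitz with respect to the Euclidean norm, uniformly over labels `q` in the
probability simplex. -/
theorem ce_loss_softmax_lipschitz (K : ℕ) (hK : 1 ≤ K)
    (q : Fin K → ℝ) (hq01 : ∀ i, q i ∈ Set.Icc (0 : ℝ) 1) (hqsum : ∑ i, q i = 1)
    (a b : Fin K → ℝ) :
    |(-∑ i, q i * Real.log (softmax a i)) - (-∑ i, q i * Real.log (softmax b i))|
      ≤ Real.sqrt 2 * K * Real.sqrt (∑ j, (a j - b j) ^ 2) := by
  rcases eq_or_lt_of_le hK with h1 | h2
  · -- K = 1 : both losses are zero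
    subst h1
    have hs : ∀ (x : Fin 1 → ℝ) (i : Fin 1), softmax x i = 1 := by
      intro x i
      have : i = 0 := Subsingleton.elim _ _
      simp [softmax, this, Fin.sum_univ_one, div_self (ne_of_gt (Real.exp_pos _))]
    simp only [hs, Real.log_one, mul_zero, Finset.sum_const_zero, neg_zero, sub_zero,
      abs_zero]
    positivity
  · -- K ≥ 2
    have hKpos : 0 < K := by omega
    have hne : (Finset.univ : Finset (Fin K)).Nonempty := by
      simpa using Finset.univ_nonempty_iff.2 (Fin.pos_iff_nonempty.mp hKpos)
    have hSpos : ∀ x : Fin K → ℝ, 0 < ∑ j, Real.exp (x j) := fun x =>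
      Finset.sum_pos (fun j _ => Real.exp_pos _) hne
    have hlog : ∀ (x : Fin K → ℝ) (i : Fin K),
        Real.log (softmax x i) = x i - Real.log (∑ j, Real.exp (x j)) := by
      intro x i
      rw [softmax, Real.log_div (Real.exp_ne_zero _) (ne_of_gt (hSpos x)), Real.log_exp]
    have hE : ∀ x : Fin K → ℝ,
        (-∑ i, q i * Real.log (softmax x i))
          = Real.log (∑ j, Real.exp (x j)) - ∑ i, q i * x i := by
      intro x
      simp only [hlog, mul_sub]
      rw [Finset.sum_sub_distrib, ← Finset.sum_mul, hqsum, one_mul]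
      ring
    rw [hE a, hE b]
    set L : ℝ := ∑ j, |a j - b j| with hLdef
    have hLnonneg : 0 ≤ L := Finset.sum_nonneg fun j _ => abs_nonneg _
    -- bound |log Sa - log Sb| ≤ L
    have hlse : |Real.log (∑ j, Real.exp (a j)) - Real.log (∑ j, Real.exp (b j))| ≤ L := by
      rw [abs_le]
      constructor
      · have := lse_diff_le hKpos b a
        simp only [abs_sub_comm (b _)] at this
        linarith
      · exact lse_diff_le hKpos a b
    -- bound |∑ q_i (a_i - b_i)| ≤ L
    have hq : |∑ i, q i * a i - ∑ i, q i * b i| ≤ L := by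
      rw [← Finset.sum_sub_distrib]
      calc |∑ i, (q i * a i - q i * b i)| ≤ ∑ i, |q i * a i - q i * b i| :=
            Finset.abs_sum_le_sum_abs _ _
        _ ≤ L := by
            apply Finset.sum_le_sum
            intro i _
            rw [← mul_sub, abs_mul]
            have h0 := (hq01 i).1
            have h1 := (hq01 i).2
            have : |q i| ≤ 1 := by rw [abs_of_nonneg h0]; exact h1
            calc |q i| * |a i - b i| ≤ 1 * |a i - b i| :=
                  mul_le_mul_of_nonneg_right this (abs_nonneg _)
              _ = |a i - b i| := one_mul _
    have hmain : |(Real.log (∑ j, Real.exp (a j)) - ∑ i, q i * a i)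
        - (Real.log (∑ j, Real.exp (b j)) - ∑ i, q i * b i)| ≤ 2 * L := by
      have := abs_sub (Real.log (∑ j, Real.exp (a j)) - Real.log (∑ j, Real.exp (b j)))
        (∑ i, q i * a i - ∑ i, q i * b i)
      calc |(Real.log (∑ j, Real.exp (a j)) - ∑ i, q i * a i)
          - (Real.log (∑ j, Real.exp (b j)) - ∑ i, q i * b i)|
          = |(Real.log (∑ j, Real.exp (a j)) - Real.log (∑ j, Real.exp (b j)))
            - (∑ i, q i * a i - ∑ i, q i * b i)| := by ring_nf
        _ ≤ |Real.log (∑ j, Real.exp (a j)) - Real.log (∑ j, Real.exp (b j))|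
            + |∑ i, q i * a i - ∑ i, q i * b i| := abs_sub _ _
        _ ≤ 2 * L := by linarith
    refine hmain.trans ?_
    -- Cauchy–Schwarz : L ≤ √K · √(∑ (a-b)²)
    set S : ℝ := ∑ j, (a j - b j) ^ 2 with hSdef
    have hSnonneg : 0 ≤ S := Finset.sum_nonneg fun j _ => sq_nonneg _
    have hcs : L ^ 2 ≤ K * S := by
      have := sq_sum_le_card_mul_sum_sq (s := (Finset.univ : Finset (Fin K)))
        (f := fun j => |a j - b j|)
      simpa [sq_abs, Finset.card_univ] using this
    have hLle : L ≤ Real.sqrt K * Real.sqrt S := by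
      have h1 : L = Real.sqrt (L ^ 2) := (Real.sqrt_sq hLnonneg).symm
      rw [h1, ← Real.sqrt_mul (Nat.cast_nonneg K) S]
      exact Real.sqrt_le_sqrt hcs
    have hfin : 2 * (Real.sqrt K * Real.sqrt S) ≤ Real.sqrt 2 * K * Real.sqrt S := by
      rw [← mul_assoc]
      apply mul_le_mul_of_nonneg_right _ (Real.sqrt_nonneg S)
      -- 2 √K ≤ √2 K, i.e. 4K ≤ 2K² for K ≥ 2
      have hsK : Real.sqrt K ^ 2 = (K : ℝ) := Real.sq_sqrt (Nat.cast_nonneg K)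
      have hs2 : Real.sqrt 2 ^ 2 = 2 := Real.sq_sqrt (by norm_num)
      have hK2 : (2 : ℝ) ≤ K := by exact_mod_cast h2
      have hsq : (2 * Real.sqrt K) ^ 2 ≤ (Real.sqrt 2 * K) ^ 2 := by
        rw [mul_pow, mul_pow, hsK, hs2]
        nlinarith
      have h2n : (0 : ℝ) ≤ 2 * Real.sqrt K := by positivity
      have hn : (0 : ℝ) ≤ Real.sqrt 2 * K := by positivity
      calc 2 * Real.sqrt K = Real.sqrt ((2 * Real.sqrt K) ^ 2) :=
            (Real.sqrt_sq h2n).symm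
        _ ≤ Real.sqrt ((Real.sqrt 2 * K) ^ 2) := Real.sqrt_le_sqrt hsq
        _ = Real.sqrt 2 * K := Real.sqrt_sq hn
    linarith
end

section
/- Let K ≥ 1 be an integer and A ∈ ℝ. For every p in the probability simplex 𝒴, the reverse cross-entropy loss ℓ(p, q) = −∑_{i=1}^K p_i · L_A(q_i) is symmetric with constant −(K−1)A: ∑_{j=1}^K ℓ(p, e_j) = −(K − 1) · A. -/
open scoped BigOperators

/-- The modified logarithm encoding the convention `log 0 := A`:
`L_A(t) = log t` for `t ≠ 0` and `L_A(0) = A`. -/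
noncomputable def logA (A : ℝ) (t : ℝ) : ℝ := if t = 0 then A else Real.log t

/-- The reverse cross-entropy loss `ℓ(p,q) = −∑_i p_i L_A(q_i)` is symmetric with
constant `−(K−1)A`: for any `p` in the probability simplex,
`∑_{j=1}^K ℓ(p, e_j) = −(K−1)A`. -/
theorem rce_loss_symmetric (K : ℕ) (hK : 1 ≤ K) (A : ℝ) (p : Fin K → ℝ)
    (hp01 : ∀ i, p i ∈ Set.Icc (0 : ℝ) 1) (hpsum : ∑ i, p i = 1) :
    ∑ j : Fin K, (-∑ i, p i * logA A (if i = j then (1 : ℝ) else 0))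
      = -(((K : ℝ) - 1) * A) := by
  have key : ∀ j : Fin K, (∑ i, p i * logA A (if i = j then (1 : ℝ) else 0))
      = A * (1 - p j) := by
    intro j
    have h1 : ∀ i, p i * logA A (if i = j then (1 : ℝ) else 0)
        = p i * A - (if i = j then p i * A else 0) := by
      intro i
      by_cases h : i = j <;> simp [h, logA]
    rw [Finset.sum_congr rfl fun i _ => h1 i, Finset.sum_sub_distrib,
      Finset.sum_ite_eq' Finset.univ j (fun i => p i * A), ← Finset.sum_mul, hpsum]
    simp; ring
  simp only [key, neg_mul, Finset.sum_neg_distrib, mul_sub,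
    Finset.sum_sub_distrib, Finset.sum_const, Finset.card_univ, Fintype.card_fin,
    ← Finset.mul_sum, hpsum]
  push_cast
  ring
end

section
/- Let K ≥ 1, let U be a set, and let ℓ : U × {e_1,…,e_K} → ℝ be symmetric with constant C₀, i.e. ∑_{j=1}^K ℓ(u, e_j) = C₀ for every u ∈ U. Let X be a set, let (x_1,y_1),…,(x_n,y_n) ∈ X × {e_1,…,e_K} be given samples, and let η ∈ ℝ. Then for every function f : X → U, the noise-averaged empirical risk L^η_n(f) = (1/n) ∑_{i=1}^n [ (1 − (K−1)η) ℓ(f(x_i), y_i) + η ∑_{j : e_j ≠ y_i} ℓ(f(x_i), e_j) ] satisfies the identity L^η_n(f) = C₀ η + (1 − ηK) L_n(f), where L_n(f) = (1/n) ∑_{i=1}^n ℓ(f(x_i), y_i). -/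
open Finset

/-- Symmetry of the loss turns the off-label mass `∑_{j ≠ a} g j` into `C - g a`. -/
theorem noisy_loss_eq_of_sum_eq {ι : Type*} [Fintype ι] [DecidableEq ι] (g : ι → ℝ) {C : ℝ}
    (hg : ∑ j, g j = C) (a : ι) (η : ℝ) :
    (1 - ((Fintype.card ι : ℝ) - 1) * η) * g a + η * ∑ j ∈ univ.filter (fun j => j ≠ a), g j
      = C * η + (1 - η * Fintype.card ι) * g a := by
  rw [filter_ne' univ a, sum_erase_eq_sub (mem_univ a), hg]
  ring

theorem inv_card_mul_sum_const_add_mul {ι : Type*} [Fintype ι] [Nonempty ι] (c b : ℝ)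
    (a : ι → ℝ) :
    (1 / Fintype.card ι : ℝ) * ∑ i, (c + b * a i)
      = c + b * ((1 / Fintype.card ι : ℝ) * ∑ i, a i) := by
  have hcard : (Fintype.card ι : ℝ) ≠ 0 := by positivity
  rw [sum_add_distrib, sum_const, card_univ, nsmul_eq_mul, ← mul_sum]
  field_simp

theorem noisy_empirical_risk_identity_general (K n : ℕ) (hn : 1 ≤ n)
    {X U : Type*} (ℓ : U → Fin K → ℝ) (C₀ : ℝ)
    (hsym : ∀ u : U, ∑ j, ℓ u j = C₀)
    (x : Fin n → X) (y : Fin n → Fin K) (η : ℝ) (f : X → U) :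
    (1 / n : ℝ) * ∑ i, ((1 - ((K : ℝ) - 1) * η) * ℓ (f (x i)) (y i)
        + η * ∑ j ∈ Finset.univ.filter (fun j => j ≠ y i), ℓ (f (x i)) j)
      = C₀ * η + (1 - η * K) * ((1 / n : ℝ) * ∑ i, ℓ (f (x i)) (y i)) := by
  have : NeZero n := ⟨by omega⟩
  have hsample := fun i => noisy_loss_eq_of_sum_eq (ℓ (f (x i))) (hsym (f (x i))) (y i) η
  simp only [Fintype.card_fin] at hsample
  simp only [hsample]
  simpa only [Fintype.card_fin] using
    inv_card_mul_sum_const_add_mul (C₀ * η) (1 - η * K) (fun i : Fin n => ℓ (f (x i)) (y i))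

/-- For a loss `ℓ` that is symmetric with constant `C₀` (i.e. `∑_{j=1}^K ℓ(u, e_j) = C₀`
for all `u`, labels identified with indices `j ∈ Fin K`), the noise-averaged empirical
risk satisfies `L^η_n(f) = C₀ η + (1 − ηK) L_n(f)`. -/
theorem noisy_empirical_risk_identity (K n : ℕ) (hK : 1 ≤ K) (hn : 1 ≤ n)
    {X U : Type*} (ℓ : U → Fin K → ℝ) (C₀ : ℝ)
    (hsym : ∀ u : U, ∑ j, ℓ u j = C₀)
    (x : Fin n → X) (y : Fin n → Fin K) (η : ℝ) (f : X → U) :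
    (1 / n : ℝ) * ∑ i, ((1 - ((K : ℝ) - 1) * η) * ℓ (f (x i)) (y i)
        + η * ∑ j ∈ Finset.univ.filter (fun j => j ≠ y i), ℓ (f (x i)) j)
      = C₀ * η + (1 - η * K) * ((1 / n : ℝ) * ∑ i, ℓ (f (x i)) (y i)) :=
  noisy_empirical_risk_identity_general K n hn ℓ C₀ hsym x y η f
end

section
/- Let K ≥ 1, let U be a set, and let ℓ : U × {e_1,…,e_K} → ℝ be symmetric with constant C₀. Let X be a set, let (x_1,y_1),…,(x_n,y_n) ∈ X × {e_1,…,e_K} be given samples, and let 0 < η ≤ 1/K. Let F be a set of functions from X to U, and define L_n(f) = (1/n) ∑_{i=1}^n ℓ(f(x_i), y_i) and L^η_n(f) = (1/n) ∑_{i=1}^n [ (1 − (K−1)η) ℓ(f(x_i), y_i) + η ∑_{j : e_j ≠ y_i} ℓ(f(x_i), e_j) ]. If f̂ ∈ F satisfies L_n(f̂) ≤ L_n(f) for all f ∈ F, then L^η_n(f̂) ≤ L^η_n(f) for all f ∈ F; that is, the symmetric loss is noise-tolerant: every empirical risk minimizer for the clean labels is an empirical risk minimizer for the uniform-noise-averaged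 risk. -/
open Finset

/-!
For a symmetric loss the losses at the wrong labels sum to `C₀ - ℓ(u, y)`, so the
noise-averaged loss equals `(1 - Kη) ℓ(u, y) + η C₀`. Hence the noisy empirical risk is
`(1 - Kη)` times the clean one plus a constant independent of `f`, and `η ≤ 1/K` makes
this a monotone affine map.
-/

section SymmetricLoss

variable {U ι : Type*} [Fintype ι] [DecidableEq ι] {ℓ : U → ι → ℝ} {C₀ : ℝ}

lemma uniformNoise_loss_eq_of_symmetric (hsym : ∀ u, ∑ j, ℓ u j = C₀) (η : ℝ) (u : U) (k : ι) :
    (1 - ((Fintype.card ι : ℝ) - 1) * η) * ℓ u k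
        + η * ∑ j ∈ univ.filter (fun j => j ≠ k), ℓ u j
      = (1 - Fintype.card ι * η) * ℓ u k + η * C₀ := by
  rw [filter_ne', sum_erase_eq_sub (mem_univ k), hsym]
  ring

lemma uniformNoise_empiricalRisk_eq_of_symmetric (hsym : ∀ u, ∑ j, ℓ u j = C₀) (η : ℝ)
    {X : Type*} {n : ℕ} (x : Fin n → X) (y : Fin n → ι) (f : X → U) :
    (1 / n : ℝ) * ∑ i, ((1 - ((Fintype.card ι : ℝ) - 1) * η) * ℓ (f (x i)) (y i)
        + η * ∑ j ∈ univ.filter (fun j => j ≠ y i), ℓ (f (x i)) j)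
      = (1 - Fintype.card ι * η) * ((1 / n : ℝ) * ∑ i, ℓ (f (x i)) (y i))
        + (1 / n : ℝ) * n * (η * C₀) := by
  simp only [uniformNoise_loss_eq_of_symmetric hsym, sum_add_distrib, ← mul_sum, sum_const,
    card_univ, Fintype.card_fin, nsmul_eq_mul]
  ring

end SymmetricLoss

theorem symmetric_loss_noise_tolerant_general (K n : ℕ)
    {X U : Type*} (ℓ : U → Fin K → ℝ) (C₀ : ℝ)
    (hsym : ∀ u : U, ∑ j, ℓ u j = C₀)
    (x : Fin n → X) (y : Fin n → Fin K) (η : ℝ)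
    (hηK : η ≤ 1 / K)
    (F : Set (X → U)) (fhat : X → U)
    (hERM : ∀ f ∈ F, (1 / n : ℝ) * ∑ i, ℓ (fhat (x i)) (y i)
        ≤ (1 / n : ℝ) * ∑ i, ℓ (f (x i)) (y i)) :
    ∀ f ∈ F,
      (1 / n : ℝ) * ∑ i, ((1 - ((K : ℝ) - 1) * η) * ℓ (fhat (x i)) (y i)
          + η * ∑ j ∈ Finset.univ.filter (fun j => j ≠ y i), ℓ (fhat (x i)) j)
        ≤ (1 / n : ℝ) * ∑ i, ((1 - ((K : ℝ) - 1) * η) * ℓ (f (x i)) (y i)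
          + η * ∑ j ∈ Finset.univ.filter (fun j => j ≠ y i), ℓ (f (x i)) j) := by
  intro f hf
  have hrisk := uniformNoise_empiricalRisk_eq_of_symmetric hsym η x y
  simp only [Fintype.card_fin] at hrisk
  have hKη : 0 ≤ 1 - (K : ℝ) * η :=
    sub_nonneg.2 (mul_comm η K ▸ mul_le_of_le_div₀ zero_le_one K.cast_nonneg hηK)
  rw [hrisk fhat, hrisk f]
  gcongr _ * ?_ + _
  exact hERM f hf

/-- A symmetric loss is noise-tolerant: if `ℓ` is symmetric with constant `C₀`
(`∑_{j=1}^K ℓ(u, e_j) = C₀` for all `u`, labels identified with indices `j ∈ Fin K`)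
and `0 < η ≤ 1/K`, then every minimizer of the clean empirical risk
`L_n(f) = (1/n) ∑_i ℓ(f(x_i), y_i)` over a class `F` also minimizes the
noise-averaged empirical risk
`L^η_n(f) = (1/n) ∑_i [(1 − (K−1)η) ℓ(f(x_i), y_i) + η ∑_{j ≠ y_i} ℓ(f(x_i), e_j)]`
over `F`. -/
theorem symmetric_loss_noise_tolerant (K n : ℕ) (hK : 1 ≤ K) (hn : 1 ≤ n)
    {X U : Type*} (ℓ : U → Fin K → ℝ) (C₀ : ℝ)
    (hsym : ∀ u : U, ∑ j, ℓ u j = C₀)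
    (x : Fin n → X) (y : Fin n → Fin K) (η : ℝ)
    (hη : 0 < η) (hηK : η ≤ 1 / K)
    (F : Set (X → U)) (fhat : X → U) (hfhatF : fhat ∈ F)
    (hERM : ∀ f ∈ F, (1 / n : ℝ) * ∑ i, ℓ (fhat (x i)) (y i)
        ≤ (1 / n : ℝ) * ∑ i, ℓ (f (x i)) (y i)) :
    ∀ f ∈ F,
      (1 / n : ℝ) * ∑ i, ((1 - ((K : ℝ) - 1) * η) * ℓ (fhat (x i)) (y i)
          + η * ∑ j ∈ Finset.univ.filter (fun j => j ≠ y i), ℓ (fhat (x i)) j)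
        ≤ (1 / n : ℝ) * ∑ i, ((1 - ((K : ℝ) - 1) * η) * ℓ (f (x i)) (y i)
          + η * ∑ j ∈ Finset.univ.filter (fun j => j ≠ y i), ℓ (f (x i)) j) :=
  symmetric_loss_noise_tolerant_general K n ℓ C₀ hsym x y η hηK F fhat hERM
end

section
/- Let (Ω, 𝔽, P) be a probability space, 𝒳 a measurable space, and let X : Ω → 𝒳, Y : Ω → {e_1,…,e_K}, Y^η : Ω → {e_1,…,e_K} be measurable. Suppose there is η ∈ ℝ such that for every measurable set B ⊆ 𝒳 and all indices i ≠ j: P(X ∈ B, Y = e_j, Y^η = e_i) = η · P(X ∈ B, Y = e_j), and P(X ∈ B, Y = e_j, Y^η = e_j) = (1 − (K−1)η) · P(X ∈ B, Y = e_j). Let U be a measurable space, ℓ : U × {e_1,…,e_K} → ℝ bounded measurable and symmetric with constant C₀, and f : 𝒳 → U measurable. Then E[ℓ(f(X), Y^η)] = C₀ η + (1 − ηK) · E[ℓ(f(X), Y)]. -/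
/-!
Split `Ω` along the fibres of `(Y, Yη)`. On `{Y = j, Yη = i}` the law of `X` is its law on
`{Y = j}` scaled by the transition rate `T i j` (`η` off the diagonal, `1 - (K - 1)η` on it), so
`E[ℓ(f X, Yη)] = E[∑ i, T i Y ℓ(f X, i)]`. Since `T = η + (1 - Kη) • 1` and `ℓ` sums to `C₀`
over the labels, the integrand is `η C₀ + (1 - Kη) ℓ(f X, Y)`.
-/

open MeasureTheory

section

variable {Ω E : Type*} [MeasurableSpace Ω] [NormedAddCommGroup E] [NormedSpace ℝ E]

theorem integral_eq_sum_setIntegral_preimage {ι : Type*} [Fintype ι] [MeasurableSpace ι]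
    [MeasurableSingletonClass ι] {μ : Measure Ω} {Z : Ω → ι} (hZ : Measurable Z)
    {h : ι → Ω → E} (hh : ∀ i, IntegrableOn (h i) (Z ⁻¹' {i}) μ) :
    ∫ ω, h (Z ω) ω ∂μ = ∑ i, ∫ ω in Z ⁻¹' {i}, h i ω ∂μ := by
  have hZi : ∀ i, MeasurableSet (Z ⁻¹' {i}) := fun i => hZ (measurableSet_singleton i)
  have hfiber : ∀ i, Set.EqOn (fun ω => h (Z ω) ω) (h i) (Z ⁻¹' {i}) := fun i ω hω => by
    simp only [show Z ω = i from hω]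
  calc ∫ ω, h (Z ω) ω ∂μ = ∫ ω in ⋃ i, Z ⁻¹' {i}, h (Z ω) ω ∂μ := by
        rw [← Set.preimage_iUnion, Set.iUnion_of_singleton, Set.preimage_univ, setIntegral_univ]
    _ = ∑ i, ∫ ω in Z ⁻¹' {i}, h (Z ω) ω ∂μ :=
        integral_iUnion_fintype hZi (pairwise_disjoint_fiber Z)
          fun i => (hh i).congr_fun (hfiber i).symm (hZi i)
    _ = ∑ i, ∫ ω in Z ⁻¹' {i}, h i ω ∂μ :=
        Finset.sum_congr rfl fun i _ => setIntegral_congr_fun (hZi i) (hfiber i)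

theorem integral_eq_smul_of_measureReal_eq_mul {α : Type*} [MeasurableSpace α]
    {μ ν : Measure α} [IsFiniteMeasure μ] [IsFiniteMeasure ν] {c : ℝ}
    (h : ∀ B, MeasurableSet B → μ.real B = c * ν.real B) (g : α → E) :
    ∫ x, g x ∂μ = c • ∫ x, g x ∂ν := by
  rcases le_or_gt 0 c with hc | hc
  · have hμ : μ = ENNReal.ofReal c • ν := by
      ext B hB
      rw [Measure.smul_apply, smul_eq_mul, ← ofReal_measureReal, h B hB, ENNReal.ofReal_mul hc,
        ofReal_measureReal]
    rw [hμ, integral_smul_measure, ENNReal.toReal_ofReal hc]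
  · -- a negative ratio of two nonnegative masses forces both measures to vanish
    have huniv := h Set.univ MeasurableSet.univ
    have hν : ν.real Set.univ = 0 := by
      nlinarith [measureReal_nonneg (μ := μ) (s := Set.univ),
        measureReal_nonneg (μ := ν) (s := Set.univ)]
    rw [hν, mul_zero] at huniv
    rw [measureReal_eq_zero_iff, Measure.measure_univ_eq_zero] at huniv hν
    simp [huniv, hν]

theorem setIntegral_comp_eq_smul_of_measureReal_eq_mul {𝒳 : Type*} [MeasurableSpace 𝒳]
    {P : Measure Ω} [IsFiniteMeasure P] {X : Ω → 𝒳} (hX : Measurable X) {S T : Set Ω} {c : ℝ}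
    (h : ∀ B, MeasurableSet B → P.real (X ⁻¹' B ∩ S) = c * P.real (X ⁻¹' B ∩ T))
    {g : 𝒳 → E} (hg : StronglyMeasurable g) :
    ∫ ω in S, g (X ω) ∂P = c • ∫ ω in T, g (X ω) ∂P := by
  rw [← integral_map hX.aemeasurable hg.aestronglyMeasurable,
    ← integral_map hX.aemeasurable hg.aestronglyMeasurable]
  refine integral_eq_smul_of_measureReal_eq_mul (fun B hB => ?_) g
  rw [map_measureReal_apply hX hB, map_measureReal_apply hX hB,
    measureReal_restrict_apply (hX hB), measureReal_restrict_apply (hX hB), h B hB]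

theorem integral_noisy_label_eq {𝒳 ι : Type*} [MeasurableSpace 𝒳] [Fintype ι]
    [MeasurableSpace ι] [MeasurableSingletonClass ι] {P : Measure Ω} [IsFiniteMeasure P]
    {X : Ω → 𝒳} {Y Yη : Ω → ι} (hX : Measurable X) (hY : Measurable Y) (hYη : Measurable Yη)
    (T : ι → ι → ℝ)
    (hT : ∀ i j B, MeasurableSet B →
      P.real {ω | X ω ∈ B ∧ Y ω = j ∧ Yη ω = i} = T i j * P.real {ω | X ω ∈ B ∧ Y ω = j})
    {g : ι → 𝒳 → E} (hg : ∀ i, StronglyMeasurable (g i))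
    (hgX : ∀ i, Integrable (fun ω => g i (X ω)) P) :
    ∫ ω, g (Yη ω) (X ω) ∂P = ∫ ω, ∑ i, T i (Y ω) • g i (X ω) ∂P := by
  have hfibre : ∀ i j B, MeasurableSet B →
      P.real (X ⁻¹' B ∩ (fun ω => (Y ω, Yη ω)) ⁻¹' {(j, i)})
        = T i j * P.real (X ⁻¹' B ∩ Y ⁻¹' {j}) := by
    intro i j B hB
    have hpair : X ⁻¹' B ∩ (fun ω => (Y ω, Yη ω)) ⁻¹' {(j, i)}
        = {ω | X ω ∈ B ∧ Y ω = j ∧ Yη ω = i} := by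
      ext ω; simp
    exact hpair ▸ hT i j B hB
  calc ∫ ω, g (Yη ω) (X ω) ∂P
      = ∑ p : ι × ι, ∫ ω in (fun ω => (Y ω, Yη ω)) ⁻¹' {p}, g p.2 (X ω) ∂P :=
        integral_eq_sum_setIntegral_preimage (h := fun p ω => g p.2 (X ω))
          (hY.prodMk hYη) fun p => (hgX p.2).integrableOn
    _ = ∑ j, ∑ i, T i j • ∫ ω in Y ⁻¹' {j}, g i (X ω) ∂P := by
        rw [Fintype.sum_prod_type]
        exact Finset.sum_congr rfl fun j _ => Finset.sum_congr rfl fun i _ =>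
          setIntegral_comp_eq_smul_of_measureReal_eq_mul hX (hfibre i j) (hg i)
    _ = ∑ j, ∫ ω in Y ⁻¹' {j}, ∑ i, T i j • g i (X ω) ∂P := by
        simp_rw [← integral_smul]
        exact Finset.sum_congr rfl fun j _ =>
          (integral_finsetSum _ fun i _ => ((hgX i).smul _).integrableOn).symm
    _ = ∫ ω, ∑ i, T i (Y ω) • g i (X ω) ∂P :=
        (integral_eq_sum_setIntegral_preimage (h := fun j ω => ∑ i, T i j • g i (X ω)) hY
          fun j => (integrable_finsetSum _ fun i _ => (hgX i).smul _).integrableOn).symm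

end

theorem sum_ite_mul_eq_mul_sum_add {ι : Type*} [Fintype ι] [DecidableEq ι] (a b : ℝ)
    (v : ι → ℝ) (j : ι) :
    ∑ i, (if i = j then a else b) * v i = b * ∑ i, v i + (a - b) * v j := by
  calc ∑ i, (if i = j then a else b) * v i
      = ∑ i, (b * v i + if i = j then (a - b) * v i else 0) :=
        Finset.sum_congr rfl fun i _ => by split_ifs <;> ring
    _ = b * ∑ i, v i + (a - b) * v j := by
        rw [Finset.sum_add_distrib, Finset.sum_ite_eq', Finset.mul_sum,
          if_pos (Finset.mem_univ j)]

theorem noisy_expected_risk_identity_general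
    {Ω 𝒳 U : Type*} [MeasurableSpace Ω] [MeasurableSpace 𝒳] [MeasurableSpace U]
    (P : Measure Ω) [IsProbabilityMeasure P]
    (K : ℕ)
    (X : Ω → 𝒳) (Y : Ω → Fin K) (Yη : Ω → Fin K)
    (hX : Measurable X) (hY : Measurable Y) (hYη : Measurable Yη)
    (η : ℝ)
    (hflip : ∀ B : Set 𝒳, MeasurableSet B → ∀ i j : Fin K, i ≠ j →
      (P {ω | X ω ∈ B ∧ Y ω = j ∧ Yη ω = i}).toReal
        = η * (P {ω | X ω ∈ B ∧ Y ω = j}).toReal)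
    (hkeep : ∀ B : Set 𝒳, MeasurableSet B → ∀ j : Fin K,
      (P {ω | X ω ∈ B ∧ Y ω = j ∧ Yη ω = j}).toReal
        = (1 - ((K : ℝ) - 1) * η) * (P {ω | X ω ∈ B ∧ Y ω = j}).toReal)
    (ℓ : U → Fin K → ℝ) (C₀ : ℝ)
    (hℓmeas : ∀ j : Fin K, Measurable fun u => ℓ u j)
    (hℓbdd : ∃ M : ℝ, ∀ (u : U) (j : Fin K), |ℓ u j| ≤ M)
    (hsym : ∀ u : U, ∑ j, ℓ u j = C₀)
    (f : 𝒳 → U) (hf : Measurable f) :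
    ∫ ω, ℓ (f (X ω)) (Yη ω) ∂P
      = C₀ * η + (1 - η * K) * ∫ ω, ℓ (f (X ω)) (Y ω) ∂P := by
  obtain ⟨M, hM⟩ := hℓbdd
  have hℓ : Measurable (Function.uncurry ℓ) := measurable_from_prod_countable_left hℓmeas
  have hint : ∀ {Z : Ω → Fin K}, Measurable Z → Integrable (fun ω => ℓ (f (X ω)) (Z ω)) P :=
    fun hZ => .of_bound (hℓ.comp ((hf.comp hX).prodMk hZ)).aestronglyMeasurable M
      (ae_of_all _ fun ω => hM (f (X ω)) _)
  have hT : ∀ i j B, MeasurableSet B →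
      P.real {ω | X ω ∈ B ∧ Y ω = j ∧ Yη ω = i}
        = (if i = j then 1 - ((K : ℝ) - 1) * η else η) * P.real {ω | X ω ∈ B ∧ Y ω = j} := by
    intro i j B hB
    split_ifs with hij
    · subst hij; exact hkeep B hB i
    · exact hflip B hB i j hij
  calc ∫ ω, ℓ (f (X ω)) (Yη ω) ∂P
      = ∫ ω, ∑ i, (if i = Y ω then 1 - ((K : ℝ) - 1) * η else η) * ℓ (f (X ω)) i ∂P :=
        integral_noisy_label_eq (g := fun i x => ℓ (f x) i) hX hY hYη _ hT
          (fun i => ((hℓmeas i).comp hf).stronglyMeasurable) fun i => hint measurable_const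
    _ = ∫ ω, C₀ * η + (1 - η * K) * ℓ (f (X ω)) (Y ω) ∂P := by
        refine integral_congr_ae (ae_of_all _ fun ω => ?_)
        simp only [sum_ite_mul_eq_mul_sum_add, hsym]
        ring
    _ = C₀ * η + (1 - η * K) * ∫ ω, ℓ (f (X ω)) (Y ω) ∂P := by
        rw [integral_add (integrable_const _) ((hint hY).const_mul _), integral_const,
          integral_const_mul, probReal_univ, one_smul]

/-- Under the uniform label-noise model (a true label `e_j` is flipped to each other
label `e_i` with probability `η`, independently of the feature `X`), a bounded
measurable loss `ℓ` that is symmetric with constant `C₀` (labels identified with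
indices in `Fin K`) satisfies
`E[ℓ(f(X), Y^η)] = C₀ η + (1 − ηK) E[ℓ(f(X), Y)]`. -/
theorem noisy_expected_risk_identity
    {Ω 𝒳 U : Type*} [MeasurableSpace Ω] [MeasurableSpace 𝒳] [MeasurableSpace U]
    (P : Measure Ω) [IsProbabilityMeasure P]
    (K : ℕ) (hK : 1 ≤ K)
    (X : Ω → 𝒳) (Y : Ω → Fin K) (Yη : Ω → Fin K)
    (hX : Measurable X) (hY : Measurable Y) (hYη : Measurable Yη)
    (η : ℝ)
    (hflip : ∀ B : Set 𝒳, MeasurableSet B → ∀ i j : Fin K, i ≠ j →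
      (P {ω | X ω ∈ B ∧ Y ω = j ∧ Yη ω = i}).toReal
        = η * (P {ω | X ω ∈ B ∧ Y ω = j}).toReal)
    (hkeep : ∀ B : Set 𝒳, MeasurableSet B → ∀ j : Fin K,
      (P {ω | X ω ∈ B ∧ Y ω = j ∧ Yη ω = j}).toReal
        = (1 - ((K : ℝ) - 1) * η) * (P {ω | X ω ∈ B ∧ Y ω = j}).toReal)
    (ℓ : U → Fin K → ℝ) (C₀ : ℝ)
    (hℓmeas : ∀ j : Fin K, Measurable fun u => ℓ u j)
    (hℓbdd : ∃ M : ℝ, ∀ (u : U) (j : Fin K), |ℓ u j| ≤ M)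
    (hsym : ∀ u : U, ∑ j, ℓ u j = C₀)
    (f : 𝒳 → U) (hf : Measurable f) :
    ∫ ω, ℓ (f (X ω)) (Yη ω) ∂P
      = C₀ * η + (1 - η * K) * ∫ ω, ℓ (f (X ω)) (Y ω) ∂P :=
  noisy_expected_risk_identity_general P K X Y Yη hX hY hYη η hflip hkeep ℓ C₀ hℓmeas hℓbdd hsym f
    hf
end

section
/- Let N, d, K ≥ 1 be integers, r ∈ ℕ and τ > 0. Let κ = (κ_1,…,κ_K) : [0,1]^d → ℝ^K, and for each n ∈ {0,1,…,N}^d let p_n = (p_{n,1},…,p_{n,K}) : [0,1]^d → ℝ^K be functions such that for every i ∈ {1,…,K}, every n, and every x ∈ [0,1]^d with max_{1≤j≤d} |x_j − n_j/N| ≤ 1/N: |κ_i(x) − p_{n,i}(x)| ≤ d^r · (max_{1≤j≤d} |x_j − n_j/N|)^τ. Then for every x ∈ [0,1]^d: ( ∑_{i=1}^K ( κ_i(x) − ∑_{n ∈ {0,…,N}^d} ψ_n(x) p_{n,i}(x) )² )^{1/2} ≤ 2^d · √K · d^r · N^{−τ}. -/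
open scoped BigOperators

lemma hat_sum_range (N : ℕ) (hN : 1 ≤ N) (s : ℝ) (hs0 : 0 ≤ s) (hsN : s ≤ N) :
    ∑ n ∈ Finset.range (N + 1), max 0 (1 - |s - (n : ℝ)|) = 1 := by
  set m : ℕ := min ⌊s⌋₊ (N - 1) with hm
  have hmN : m + 1 ≤ N := by
    have : m ≤ N - 1 := min_le_right _ _
    omega
  have h1 : (m : ℝ) ≤ s := by
    calc (m : ℝ) ≤ (⌊s⌋₊ : ℝ) := by exact_mod_cast min_le_left _ _
    _ ≤ s := Nat.floor_le hs0
  have h2 : s ≤ (m : ℝ) + 1 := by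
    rcases le_or_gt ⌊s⌋₊ (N - 1) with h | h
    · have hmeq : m = ⌊s⌋₊ := min_eq_left h
      rw [hmeq]
      exact le_of_lt (Nat.lt_floor_add_one s)
    · have hmeq : m = N - 1 := min_eq_right h.le
      have hNm : (m : ℝ) + 1 = (N : ℝ) := by
        have : m + 1 = N := by omega
        exact_mod_cast congrArg (Nat.cast : ℕ → ℝ) this
      linarith [hsN]
  have hpair : ({m, m + 1} : Finset ℕ) ⊆ Finset.range (N + 1) := by
    intro n hn
    simp only [Finset.mem_insert, Finset.mem_singleton] at hn
    rcases hn with rfl | rfl <;> simp <;> omega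
  rw [← Finset.sum_subset hpair (by
    intro n hn hnot
    simp only [Finset.mem_insert, Finset.mem_singleton] at hnot
    push_neg at hnot
    have hone : 1 ≤ |s - (n : ℝ)| := by
      rcases (by omega : n < m ∨ m + 1 < n) with hlt | hgt
      · have : (n : ℝ) + 1 ≤ (m : ℝ) := by exact_mod_cast hlt
        rw [abs_of_nonneg (by linarith)]
        linarith
      · have : (m : ℝ) + 2 ≤ (n : ℝ) := by exact_mod_cast hgt
        rw [abs_of_nonpos (by linarith)]
        linarith
    exact max_eq_left (by linarith))]
  rw [Finset.sum_pair (by omega : m ≠ m + 1)]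
  have e1 : |s - (m : ℝ)| = s - m := abs_of_nonneg (by linarith)
  have e2 : |s - ((m + 1 : ℕ) : ℝ)| = (m : ℝ) + 1 - s := by
    push_cast
    rw [abs_of_nonpos (by linarith)]
    ring
  rw [e1, e2, max_eq_right (by linarith), max_eq_right (by linarith)]
  ring

set_option maxHeartbeats 800000 in
lemma psi_sum_one (N d : ℕ) (hN : 1 ≤ N) (x : Fin d → ℝ)
    (hx : ∀ j, x j ∈ Set.Icc (0 : ℝ) 1) :
    ∑ n : Fin d → Fin (N + 1),
      ∏ j, max 0 (1 - |(N : ℝ) * x j - ((n j : ℕ) : ℝ)|) = 1 := by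
  have key : ∀ j, ∑ k : Fin (N + 1), max 0 (1 - |(N : ℝ) * x j - ((k : ℕ) : ℝ)|) = 1 := by
    intro j
    rw [Fin.sum_univ_eq_sum_range (fun k => max 0 (1 - |(N : ℝ) * x j - (k : ℝ)|))]
    exact hat_sum_range N hN _ (mul_nonneg (by positivity) (hx j).1)
      (by nlinarith [(hx j).2, (by positivity : (0:ℝ) ≤ (N:ℝ))])
  calc ∑ n : Fin d → Fin (N + 1), ∏ j, max 0 (1 - |(N : ℝ) * x j - ((n j : ℕ) : ℝ)|)
      = ∑ n ∈ Fintype.piFinset (fun _ : Fin d => (Finset.univ : Finset (Fin (N + 1)))),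
          ∏ j, max 0 (1 - |(N : ℝ) * x j - ((n j : ℕ) : ℝ)|) := by
        rw [Fintype.piFinset_univ]
    _ = ∏ j, ∑ k : Fin (N + 1), max 0 (1 - |(N : ℝ) * x j - ((k : ℕ) : ℝ)|) :=
        (Finset.prod_univ_sum (fun _ : Fin d => (Finset.univ : Finset (Fin (N + 1))))
          (fun j k => max 0 (1 - |(N : ℝ) * x j - ((k : ℕ) : ℝ)|))).symm
    _ = 1 := by simp [key]

/-- If each `p_{n,·}` approximates `κ` to order `d^r (max_j |x_j − n_j/N|)^τ` on the
support of the hat function `ψ_n(x) = ∏_j max(0, 1 − |N x_j − n_j|)`, then the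
partition-of-unity blend `∑_n ψ_n p_n` approximates `κ` in Euclidean norm by
`2^d √K d^r N^{−τ}` on `[0,1]^d`. -/
theorem partition_blend_approx (N d K : ℕ) (hN : 1 ≤ N) (hd : 1 ≤ d) (hK : 1 ≤ K)
    (r : ℕ) (τ : ℝ) (hτ : 0 < τ)
    (κ : (Fin d → ℝ) → Fin K → ℝ)
    (p : (Fin d → Fin (N + 1)) → (Fin d → ℝ) → Fin K → ℝ)
    (happrox : ∀ (i : Fin K) (n : Fin d → Fin (N + 1)) (x : Fin d → ℝ),
      (∀ j, x j ∈ Set.Icc (0 : ℝ) 1) →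
      (∀ j, |x j - ((n j : ℕ) : ℝ) / N| ≤ 1 / N) →
      |κ x i - p n x i| ≤ (d : ℝ) ^ r * (⨆ j, |x j - ((n j : ℕ) : ℝ) / N|) ^ τ)
    (x : Fin d → ℝ) (hx : ∀ j, x j ∈ Set.Icc (0 : ℝ) 1) :
    Real.sqrt (∑ i, (κ x i - ∑ n : Fin d → Fin (N + 1),
        (∏ j, max 0 (1 - |(N : ℝ) * x j - ((n j : ℕ) : ℝ)|)) * p n x i) ^ 2)
      ≤ 2 ^ d * Real.sqrt K * (d : ℝ) ^ r * (N : ℝ) ^ (-τ) := by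
  haveI : Nonempty (Fin d) := Fin.pos_iff_nonempty.mp hd
  have hNpos : (0 : ℝ) < N := by exact_mod_cast hN
  set ψ : (Fin d → Fin (N + 1)) → ℝ :=
    fun n => ∏ j, max 0 (1 - |(N : ℝ) * x j - ((n j : ℕ) : ℝ)|) with hψ
  set C : ℝ := (d : ℝ) ^ r * (N : ℝ) ^ (-τ) with hCdef
  have hC : 0 ≤ C := by positivity
  have hψnn : ∀ n, 0 ≤ ψ n := fun n => Finset.prod_nonneg fun j _ => le_max_left _ _
  have hsum1 : ∑ n, ψ n = 1 := psi_sum_one N d hN x hx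
  have hterm : ∀ (i : Fin K) n, ψ n * |κ x i - p n x i| ≤ ψ n * C := by
    intro i n
    rcases eq_or_lt_of_le (hψnn n) with h | h
    · rw [← h]; simp
    · refine mul_le_mul_of_nonneg_left ?_ h.le
      have hco : ∀ j, |x j - ((n j : ℕ) : ℝ) / N| ≤ 1 / N := by
        intro j
        have hfac : 0 < max 0 (1 - |(N : ℝ) * x j - ((n j : ℕ) : ℝ)|) := by
          have hne : max 0 (1 - |(N : ℝ) * x j - ((n j : ℕ) : ℝ)|) ≠ 0 := by
            have := Finset.prod_ne_zero_iff.mp (show ψ n ≠ 0 from h.ne')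
            exact this j (Finset.mem_univ j)
          exact lt_of_le_of_ne (le_max_left _ _) (Ne.symm hne)
        have habs : |(N : ℝ) * x j - ((n j : ℕ) : ℝ)| ≤ 1 := by
          by_contra hc
          push_neg at hc
          rw [max_eq_left (by linarith)] at hfac
          exact lt_irrefl _ hfac
        have hxrw : x j - ((n j : ℕ) : ℝ) / N = ((N : ℝ) * x j - ((n j : ℕ) : ℝ)) / N := by
          field_simp
        rw [hxrw, abs_div, abs_of_pos hNpos]
        gcongr
      have hsup : (⨆ j, |x j - ((n j : ℕ) : ℝ) / N|) ≤ 1 / N := ciSup_le hco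
      have hsupnn : 0 ≤ ⨆ j, |x j - ((n j : ℕ) : ℝ) / N| :=
        Real.iSup_nonneg fun j => abs_nonneg _
      calc |κ x i - p n x i| ≤ (d : ℝ) ^ r * (⨆ j, |x j - ((n j : ℕ) : ℝ) / N|) ^ τ :=
            happrox i n x hx hco
        _ ≤ (d : ℝ) ^ r * ((1 : ℝ) / N) ^ τ :=
            mul_le_mul_of_nonneg_left (Real.rpow_le_rpow hsupnn hsup hτ.le) (by positivity)
        _ = C := by
            rw [hCdef, one_div, Real.inv_rpow hNpos.le, ← Real.rpow_neg hNpos.le]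
  have hEi : ∀ i : Fin K, |κ x i - ∑ n, ψ n * p n x i| ≤ C := by
    intro i
    have hrw : κ x i - ∑ n, ψ n * p n x i = ∑ n, ψ n * (κ x i - p n x i) := by
      simp only [mul_sub, Finset.sum_sub_distrib, ← Finset.sum_mul, hsum1, one_mul]
    rw [hrw]
    calc |∑ n, ψ n * (κ x i - p n x i)| ≤ ∑ n, |ψ n * (κ x i - p n x i)| :=
          Finset.abs_sum_le_sum_abs _ _
      _ = ∑ n, ψ n * |κ x i - p n x i| := by
          simp only [abs_mul]
          exact Finset.sum_congr rfl fun n _ => by rw [abs_of_nonneg (hψnn n)]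
      _ ≤ ∑ n, ψ n * C := Finset.sum_le_sum fun n _ => hterm i n
      _ = C := by rw [← Finset.sum_mul, hsum1, one_mul]
  have step1 : Real.sqrt (∑ i, (κ x i - ∑ n, ψ n * p n x i) ^ 2)
      ≤ Real.sqrt (∑ _i : Fin K, C ^ 2) := by
    apply Real.sqrt_le_sqrt
    refine Finset.sum_le_sum fun i _ => ?_
    have := abs_le.mp (hEi i)
    exact sq_le_sq' (by linarith [this.1]) this.2
  have step2 : Real.sqrt (∑ _i : Fin K, C ^ 2) = Real.sqrt K * C := by
    rw [Finset.sum_const, Finset.card_univ, Fintype.card_fin, nsmul_eq_mul,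
      Real.sqrt_mul (by positivity), Real.sqrt_sq hC]
  have h2d : (1 : ℝ) ≤ 2 ^ d := one_le_pow₀ (by norm_num : (1:ℝ) ≤ 2)
  calc Real.sqrt (∑ i, (κ x i - ∑ n, ψ n * p n x i) ^ 2)
      ≤ Real.sqrt K * C := step1.trans (le_of_eq step2)
    _ ≤ 2 ^ d * (Real.sqrt K * C) :=
        le_mul_of_one_le_left (mul_nonneg (Real.sqrt_nonneg _) hC) h2d
    _ = 2 ^ d * Real.sqrt K * (d : ℝ) ^ r * (N : ℝ) ^ (-τ) := by rw [hCdef]; ring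
end

section
/- Let N, d, K ≥ 1 be integers and r, k ∈ ℕ. For each n ∈ {0,1,…,N}^d, each multi-index s ∈ ℕ^d with ‖s‖₁ ≤ r, and each i ∈ {1,…,K}, let c^{(i)}_{n,s} ∈ [−1,1], and let φ_{n,s} : [0,1]^d → ℝ satisfy: (i) |ψ_n(x) (x − n/N)^s − φ_{n,s}(x)| ≤ 3(d+r) 2^{−2k} for all x ∈ [0,1]^d, and (ii) φ_{n,s}(x) = 0 whenever ψ_n(x)(x − n/N)^s = 0. Define p_i(x) = ∑_{n} ∑_{‖s‖₁ ≤ r} c^{(i)}_{n,s} ψ_n(x) (x − n/N)^s and φ_i(x) = ∑_{n} ∑_{‖s‖₁ ≤ r} c^{(i)}_{n,s} φ_{n,s}(x). Then for every x ∈ [0,1]^d: ( ∑_{i=1}^K (p_i(x) − φ_i(x))² )^{1/2} ≤ 3 · √K · 2^d · (r+1) · (d+r) · d^r · 2^{−2k}. -/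
set_option maxRecDepth 10000

open scoped BigOperators

/-- The finite set of multi-indices `s ∈ ℕ^d` with `‖s‖₁ = s_1 + ⋯ + s_d ≤ r`. -/
def multiIndices (d r : ℕ) : Finset (Fin d → ℕ) :=
  (Fintype.piFinset fun _ : Fin d => Finset.range (r + 1)).filter fun s => ∑ j, s j ≤ r


lemma card_multiIndices_le (d r : ℕ) (hd : 1 ≤ d) :
    (multiIndices d r).card ≤ (r + 1) * d ^ r := by
  classical
  have hd' : 0 < d := hd
  set j0 : Fin d := ⟨0, hd'⟩ with hj0
  set L : (Fin d → ℕ) → List (Fin d) := fun s =>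
    (List.finRange d).flatMap fun j => List.replicate (s j) j with hL
  have hcount : ∀ s j, (L s).count j = s j := by
    intro s j
    rw [hL]
    rw [List.count_flatMap]
    simp only [Function.comp_def, List.count_replicate]
    rw [← Fin.sum_univ_def]
    simp only [beq_iff_eq]
    rw [Finset.sum_ite_eq' Finset.univ j s]
    simp
  have hlen : ∀ s, (L s).length = ∑ j, s j := by
    intro s
    simp [hL, List.length_flatMap, Function.comp_def, ← Fin.sum_univ_def]
  have := Finset.card_le_card_of_injOn
    (f := fun s => ((∑ j, s j, fun m : Fin r => (L s).getD m j0) : ℕ × (Fin r → Fin d)))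
    (t := Finset.range (r + 1) ×ˢ Finset.univ) ?_ ?_ (s := multiIndices d r)
  · calc (multiIndices d r).card ≤ _ := this
      _ = (r + 1) * d ^ r := by
        simp [Finset.card_product, Finset.card_univ]
  · intro s hs
    simp only [multiIndices, Finset.mem_coe, Finset.mem_filter] at hs
    simp [Finset.mem_product, Nat.lt_succ_iff, hs.2]
  · intro s hs s' hs' h
    simp only [multiIndices, Finset.mem_coe, Finset.mem_filter] at hs hs'
    simp only [Prod.mk.injEq, funext_iff] at h
    have hLeq : L s = L s' := by
      have hl : (L s).length = (L s').length := by rw [hlen, hlen, h.1]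
      refine List.ext_getElem hl ?_
      intro m h1 h2
      have hm : m < r := lt_of_lt_of_le h1 (by rw [hlen]; exact hs.2)
      have := h.2 ⟨m, hm⟩
      rwa [List.getD_eq_getElem _ _ h1, List.getD_eq_getElem _ _ h2] at this
    funext j
    rw [← hcount s j, ← hcount s' j, hLeq]

lemma card_support_le (N d : ℕ) (x : Fin d → ℝ) (hx : ∀ j, 0 ≤ x j) :
    (Finset.univ.filter fun n : Fin d → Fin (N + 1) =>
      (∏ j, max 0 (1 - |(N : ℝ) * x j - ((n j : ℕ) : ℝ)|)) ≠ 0).card ≤ 2 ^ d := by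
  classical
  set fl : Fin d → ℕ := fun j => ⌊(N : ℝ) * x j⌋₊ with hfl
  have key : ∀ n : Fin d → Fin (N + 1),
      (∏ j, max 0 (1 - |(N : ℝ) * x j - ((n j : ℕ) : ℝ)|)) ≠ 0 →
      ∀ j, (n j : ℕ) = fl j ∨ (n j : ℕ) = fl j + 1 := by
    intro n hn j
    have hj : max 0 (1 - |(N : ℝ) * x j - ((n j : ℕ) : ℝ)|) ≠ 0 := by
      intro h0
      exact hn (Finset.prod_eq_zero (Finset.mem_univ j) h0)
    have hpos : 0 < 1 - |(N : ℝ) * x j - ((n j : ℕ) : ℝ)| := by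
      have hpos' : 0 < max 0 (1 - |(N : ℝ) * x j - ((n j : ℕ) : ℝ)|) :=
        lt_of_le_of_ne (le_max_left _ _) (Ne.symm hj)
      rcases lt_max_iff.mp hpos' with h | h
      · exact absurd h (lt_irrefl 0)
      · exact h
    have habs : |(N : ℝ) * x j - ((n j : ℕ) : ℝ)| < 1 := by linarith
    rw [abs_lt] at habs
    have ha : (0 : ℝ) ≤ (N : ℝ) * x j := mul_nonneg (Nat.cast_nonneg N) (hx j)
    have h1 : fl j ≤ (n j : ℕ) := by
      have : fl j < (n j : ℕ) + 1 := by
        rw [hfl]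
        rw [Nat.floor_lt ha]
        push_cast
        linarith [habs.2]
      omega
    have h2 : (n j : ℕ) ≤ fl j + 1 := by
      have : (n j : ℕ) ≤ ⌊(N : ℝ) * x j + 1⌋₊ := by
        apply Nat.le_floor
        push_cast
        linarith [habs.1]
      rwa [Nat.floor_add_one ha] at this
    omega
  have inj : Set.InjOn (fun n : Fin d → Fin (N + 1) => fun j => decide ((n j : ℕ) = fl j + 1))
      ↑(Finset.univ.filter fun n : Fin d → Fin (N + 1) =>
        (∏ j, max 0 (1 - |(N : ℝ) * x j - ((n j : ℕ) : ℝ)|)) ≠ 0) := by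
    intro n hn n' hn' h
    simp only [Finset.coe_filter, Set.mem_setOf_eq] at hn hn'
    simp only [funext_iff] at h
    funext j
    have hj := h j
    have k1 := key n hn.2 j
    have k2 := key n' hn'.2 j
    have : (n j : ℕ) = (n' j : ℕ) := by
      by_cases hb : (n j : ℕ) = fl j + 1
      · have : decide ((n' j : ℕ) = fl j + 1) = true := by rw [← hj]; simpa using hb
        simp at this; omega
      · have : decide ((n' j : ℕ) = fl j + 1) = false := by
          rw [← hj]; simpa using hb
        simp at this; omega
    exact Fin.ext this
  calc (Finset.univ.filter fun n : Fin d → Fin (N + 1) =>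
      (∏ j, max 0 (1 - |(N : ℝ) * x j - ((n j : ℕ) : ℝ)|)) ≠ 0).card
      ≤ (Finset.univ : Finset (Fin d → Bool)).card :=
        Finset.card_le_card_of_injOn _ (fun _ _ => Finset.mem_univ _) inj
    _ = 2 ^ d := by rw [Finset.card_univ, Fintype.card_fun]; simp

/-- If each network `φ_{n,s}` approximates the localized monomial
`ψ_n(x)(x − n/N)^s` within `3(d+r)2^{−2k}` on `[0,1]^d` and vanishes wherever the
localized monomial vanishes, and the coefficients satisfy `|c^{(i)}_{n,s}| ≤ 1`, then
the coefficient combinations `p_i = ∑_{n,s} c^{(i)}_{n,s} ψ_n (x − n/N)^s` and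
`φ_i = ∑_{n,s} c^{(i)}_{n,s} φ_{n,s}` satisfy, for every `x ∈ [0,1]^d`,
`(∑_i (p_i(x) − φ_i(x))²)^{1/2} ≤ 3 √K 2^d (r+1)(d+r) d^r 2^{−2k}`. -/
theorem localized_monomial_blend_approx (N d K r k : ℕ)
    (hN : 1 ≤ N) (hd : 1 ≤ d) (hK : 1 ≤ K)
    (c : (Fin d → Fin (N + 1)) → (Fin d → ℕ) → Fin K → ℝ)
    (hc : ∀ (n : Fin d → Fin (N + 1)) (s : Fin d → ℕ) (i : Fin K),
      (∑ j, s j) ≤ r → |c n s i| ≤ 1)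
    (φ : (Fin d → Fin (N + 1)) → (Fin d → ℕ) → (Fin d → ℝ) → ℝ)
    (happrox : ∀ (n : Fin d → Fin (N + 1)) (s : Fin d → ℕ), (∑ j, s j) ≤ r →
      ∀ x : Fin d → ℝ, (∀ j, x j ∈ Set.Icc (0 : ℝ) 1) →
      |(∏ j, max 0 (1 - |(N : ℝ) * x j - ((n j : ℕ) : ℝ)|))
          * (∏ j, (x j - ((n j : ℕ) : ℝ) / N) ^ (s j)) - φ n s x|
        ≤ 3 * ((d : ℝ) + r) / 2 ^ (2 * k))
    (hzero : ∀ (n : Fin d → Fin (N + 1)) (s : Fin d → ℕ), (∑ j, s j) ≤ r →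
      ∀ x : Fin d → ℝ, (∀ j, x j ∈ Set.Icc (0 : ℝ) 1) →
      (∏ j, max 0 (1 - |(N : ℝ) * x j - ((n j : ℕ) : ℝ)|))
          * (∏ j, (x j - ((n j : ℕ) : ℝ) / N) ^ (s j)) = 0 →
      φ n s x = 0)
    (x : Fin d → ℝ) (hx : ∀ j, x j ∈ Set.Icc (0 : ℝ) 1) :
    Real.sqrt (∑ i,
        ((∑ n : Fin d → Fin (N + 1), ∑ s ∈ multiIndices d r, c n s i
            * ((∏ j, max 0 (1 - |(N : ℝ) * x j - ((n j : ℕ) : ℝ)|))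
              * ∏ j, (x j - ((n j : ℕ) : ℝ) / N) ^ (s j)))
          - ∑ n : Fin d → Fin (N + 1), ∑ s ∈ multiIndices d r, c n s i * φ n s x) ^ 2)
      ≤ 3 * Real.sqrt K * 2 ^ d * ((r : ℝ) + 1) * ((d : ℝ) + r) * (d : ℝ) ^ r
          / 2 ^ (2 * k) := by

  have hMI : ∀ s ∈ multiIndices d r, (∑ j, s j) ≤ r := fun s hs =>
    (Finset.mem_filter.mp hs).2
  have hcard := card_multiIndices_le d r hd
  have hsupp := card_support_le N d x (fun j => (hx j).1)
  classical
  set ε : ℝ := 3 * ((d : ℝ) + r) / 2 ^ (2 * k) with hε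
  have hε0 : 0 ≤ ε := by positivity
  set ψ : (Fin d → Fin (N + 1)) → ℝ :=
    fun n => ∏ j, max 0 (1 - |(N : ℝ) * x j - ((n j : ℕ) : ℝ)|) with hψ
  set mono : (Fin d → Fin (N + 1)) → (Fin d → ℕ) → ℝ :=
    fun n s => ∏ j, (x j - ((n j : ℕ) : ℝ) / N) ^ (s j) with hmono
  set T : Finset (Fin d → Fin (N + 1)) := Finset.univ.filter fun n => ψ n ≠ 0 with hT
  set B : ℝ := (2 ^ d : ℝ) * (((r : ℝ) + 1) * (d : ℝ) ^ r) * ε with hB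
  have hB0 : 0 ≤ B := by positivity
  have habs : ∀ i : Fin K,
      |(∑ n : Fin d → Fin (N + 1), ∑ s ∈ multiIndices d r, c n s i * (ψ n * mono n s))
        - ∑ n : Fin d → Fin (N + 1), ∑ s ∈ multiIndices d r, c n s i * φ n s x| ≤ B := by
    intro i
    have hre : (∑ n : Fin d → Fin (N + 1), ∑ s ∈ multiIndices d r, c n s i * (ψ n * mono n s))
        - ∑ n : Fin d → Fin (N + 1), ∑ s ∈ multiIndices d r, c n s i * φ n s x
        = ∑ n : Fin d → Fin (N + 1), ∑ s ∈ multiIndices d r, c n s i * (ψ n * mono n s - φ n s x) := by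
      rw [← Finset.sum_sub_distrib]
      congr 1
      funext n
      rw [← Finset.sum_sub_distrib]
      congr 1
      funext s
      ring
    rw [hre]
    calc |∑ n : Fin d → Fin (N + 1), ∑ s ∈ multiIndices d r, c n s i * (ψ n * mono n s - φ n s x)|
        ≤ ∑ n : Fin d → Fin (N + 1), |∑ s ∈ multiIndices d r, c n s i * (ψ n * mono n s - φ n s x)| :=
          Finset.abs_sum_le_sum_abs _ _
      _ ≤ ∑ n : Fin d → Fin (N + 1), ∑ s ∈ multiIndices d r, |c n s i * (ψ n * mono n s - φ n s x)| :=
          Finset.sum_le_sum fun n _ => Finset.abs_sum_le_sum_abs _ _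
      _ = ∑ n ∈ T, ∑ s ∈ multiIndices d r, |c n s i * (ψ n * mono n s - φ n s x)| := by
          refine (Finset.sum_subset (Finset.subset_univ T) ?_).symm
          intro n _ hn
          have hψ0 : ψ n = 0 := by
            by_contra h
            exact hn (Finset.mem_filter.mpr ⟨Finset.mem_univ n, h⟩)
          refine Finset.sum_eq_zero fun s hs => ?_
          have hsr := hMI s hs
          have hψ0' : (∏ j, max 0 (1 - |(N : ℝ) * x j - ((n j : ℕ) : ℝ)|)) = 0 := by
            simpa [hψ] using hψ0
          have hφ0 : φ n s x = 0 := hzero n s hsr x hx (by rw [hψ0', zero_mul])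
          simp only [hψ, hmono]
          rw [hψ0', hφ0]
          simp
      _ ≤ ∑ n ∈ T, ∑ s ∈ multiIndices d r, ε := by
          refine Finset.sum_le_sum fun n _ => Finset.sum_le_sum fun s hs => ?_
          have hsr := hMI s hs
          rw [abs_mul]
          have h1 := hc n s i hsr
          have h2 : |ψ n * mono n s - φ n s x| ≤ ε := by
            simpa [hψ, hmono] using happrox n s hsr x hx
          calc |c n s i| * |ψ n * mono n s - φ n s x| ≤ 1 * ε :=
                mul_le_mul h1 h2 (abs_nonneg _) zero_le_one
            _ = ε := one_mul ε
      _ = (T.card : ℝ) * (((multiIndices d r).card : ℝ) * ε) := by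
          rw [Finset.sum_const, Finset.sum_const, nsmul_eq_mul, nsmul_eq_mul]
      _ ≤ B := by
          rw [hB]
          have hT2 : (T.card : ℝ) ≤ (2 : ℝ) ^ d := by
            calc (T.card : ℝ) ≤ ((2 ^ d : ℕ) : ℝ) := Nat.cast_le.mpr hsupp
              _ = (2 : ℝ) ^ d := by push_cast; ring
          have hMI2 : ((multiIndices d r).card : ℝ) ≤ ((r : ℝ) + 1) * (d : ℝ) ^ r := by
            calc ((multiIndices d r).card : ℝ) ≤ (((r + 1) * d ^ r : ℕ) : ℝ) := Nat.cast_le.mpr hcard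
              _ = ((r : ℝ) + 1) * (d : ℝ) ^ r := by push_cast; ring
          have := mul_le_mul hT2 (mul_le_mul_of_nonneg_right hMI2 hε0)
            (by positivity) (by positivity)
          linarith
  calc Real.sqrt (∑ i,
        ((∑ n : Fin d → Fin (N + 1), ∑ s ∈ multiIndices d r, c n s i * (ψ n * mono n s))
          - ∑ n : Fin d → Fin (N + 1), ∑ s ∈ multiIndices d r, c n s i * φ n s x) ^ 2)
      ≤ Real.sqrt (∑ _i : Fin K, B ^ 2) := by
        apply Real.sqrt_le_sqrt
        refine Finset.sum_le_sum fun i _ => ?_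
        rw [← sq_abs]
        exact pow_le_pow_left₀ (abs_nonneg _) (habs i) 2
    _ = Real.sqrt K * B := by
        rw [Finset.sum_const, Finset.card_univ, Fintype.card_fin, nsmul_eq_mul,
          Real.sqrt_mul (Nat.cast_nonneg K), Real.sqrt_sq hB0]
    _ = 3 * Real.sqrt K * 2 ^ d * ((r : ℝ) + 1) * ((d : ℝ) + r) * (d : ℝ) ^ r
          / 2 ^ (2 * k) := by
        rw [hB, hε]; ring
end
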